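/- arXiv:2202.05800 — 7 statements merged into one kernel-verified Lean document; each statement's English description precedes it below -/
import Mathlib

section
/- With the setup of the previous theorem, among all optimal pairs (ρ,η) ∈ S* = {(ρ,η) : ρ ∈ [λₙ, λ_{q+1}], η = 2ρ/(λ_{q+1}+λₙ)}, the choice (ρ*, 1) with ρ* = (λ_{q+1}+λₙ)/2 minimizes the estimation error: for every vector z and every (ρ,η) ∈ S*, ‖(I − Ĥ(ρ*,q)^{-1}H)z‖ ≤ ‖(I − η Ĥ(ρ,q)^{-1}H)z‖. -/
open scoped RealInnerProductSpace

/-- Rank-one projection `x ↦ ⟪v, x⟫ • v`. -/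
noncomputable def projCL {n : ℕ} (v : EuclideanSpace ℝ (Fin n)) :
    EuclideanSpace ℝ (Fin n) →L[ℝ] EuclideanSpace ℝ (Fin n) :=
  (innerSL ℝ v).smulRight v

/-- The approximation `Ĥ(ρ,q)` keeping the top `q` eigenpairs and replacing the
remaining eigenvalues by `ρ`. -/
noncomputable def hatH {n : ℕ} (v : OrthonormalBasis (Fin n) ℝ (EuclideanSpace ℝ (Fin n)))
    (lam : Fin n → ℝ) (q : ℕ) (ρ : ℝ) :
    EuclideanSpace ℝ (Fin n) →L[ℝ] EuclideanSpace ℝ (Fin n) :=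
  ∑ k : Fin n, (if (k : ℕ) < q then lam k else ρ) • projCL (v k)

/-- The inverse of `Ĥ(ρ,q)`. -/
noncomputable def hatHinv {n : ℕ} (v : OrthonormalBasis (Fin n) ℝ (EuclideanSpace ℝ (Fin n)))
    (lam : Fin n → ℝ) (q : ℕ) (ρ : ℝ) :
    EuclideanSpace ℝ (Fin n) →L[ℝ] EuclideanSpace ℝ (Fin n) :=
  ∑ k : Fin n, (if (k : ℕ) < q then (lam k)⁻¹ else ρ⁻¹) • projCL (v k)

/-- Iteration matrix `I − η Ĥ(ρ,q)⁻¹ H`. -/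
noncomputable def iterMat {n : ℕ} (H : EuclideanSpace ℝ (Fin n) →L[ℝ] EuclideanSpace ℝ (Fin n))
    (v : OrthonormalBasis (Fin n) ℝ (EuclideanSpace ℝ (Fin n)))
    (lam : Fin n → ℝ) (q : ℕ) (ρ η : ℝ) :
    EuclideanSpace ℝ (Fin n) →L[ℝ] EuclideanSpace ℝ (Fin n) :=
  ContinuousLinearMap.id ℝ _ - η • ((hatHinv v lam q ρ).comp H)

open scoped InnerProductSpace

/-!
Both iteration operators are diagonal in the eigenbasis `v`. On the first `q` eigenvectors the
operator for `(ρ*, 1)` vanishes, and on the remaining ones the two operators coincide, because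
`η / ρ = 2 / (λ_{q+1} + λₙ) = 1 / ρ*` on `S*`. Parseval then compares the norms
coefficientwise.
-/

namespace OrthonormalBasis

variable {ι 𝕜 E : Type*} [Fintype ι] [RCLike 𝕜] [NormedAddCommGroup E] [InnerProductSpace 𝕜 E]

theorem norm_le_norm_of_forall_norm_inner_le (b : OrthonormalBasis ι 𝕜 E) {x y : E}
    (h : ∀ i, ‖⟪b i, x⟫_𝕜‖ ≤ ‖⟪b i, y⟫_𝕜‖) : ‖x‖ ≤ ‖y‖ := by
  have hsq : ‖x‖ ^ 2 ≤ ‖y‖ ^ 2 := by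
    rw [← b.sum_sq_norm_inner_right x, ← b.sum_sq_norm_inner_right y]
    exact Finset.sum_le_sum fun i _ => pow_le_pow_left₀ (norm_nonneg _) (h i) 2
  exact (pow_le_pow_iff_left₀ (norm_nonneg _) (norm_nonneg _) two_ne_zero).mp hsq

theorem inner_apply_of_apply_eq_smul (b : OrthonormalBasis ι 𝕜 E) (T : E →L[𝕜] E)
    {μ : ι → 𝕜} (hT : ∀ k, T (b k) = μ k • b k) (k : ι) (x : E) :
    ⟪b k, T x⟫_𝕜 = μ k * ⟪b k, x⟫_𝕜 := by
  have hTx : T x = ∑ j, (μ j * ⟪b j, x⟫_𝕜) • b j := by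
    conv_lhs => rw [← b.sum_repr' x]
    simp only [map_sum, map_smul, hT, smul_smul, mul_comm]
  rw [hTx, b.orthonormal.inner_right_fintype]

end OrthonormalBasis

section Eigenbasis

variable {n : ℕ} (v : OrthonormalBasis (Fin n) ℝ (EuclideanSpace ℝ (Fin n))) (lam : Fin n → ℝ)
  (q : ℕ)

theorem hatHinv_apply_basis (ρ : ℝ) (k : Fin n) :
    hatHinv v lam q ρ (v k) = (if (k : ℕ) < q then (lam k)⁻¹ else ρ⁻¹) • v k := by
  rw [hatHinv, sum_apply, Finset.sum_eq_single k (fun j _ hjk => ?_) (by simp)]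
  all_goals rw [smul_apply, projCL, ContinuousLinearMap.smulRight_apply, innerSL_apply_apply]
  · rw [real_inner_self_eq_norm_sq, v.norm_eq_one, one_pow, one_smul]
  · rw [v.orthonormal.inner_eq_zero hjk, zero_smul, smul_zero]

theorem inner_iterMat_apply {H : EuclideanSpace ℝ (Fin n) →L[ℝ] EuclideanSpace ℝ (Fin n)}
    (hH : ∀ k, H (v k) = lam k • v k) (ρ η : ℝ) (k : Fin n) (z : EuclideanSpace ℝ (Fin n)) :
    ⟪v k, iterMat H v lam q ρ η z⟫ =
      (1 - η * (if (k : ℕ) < q then (lam k)⁻¹ else ρ⁻¹) * lam k) * ⟪v k, z⟫ := by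
  simp only [iterMat, sub_apply, ContinuousLinearMap.id_apply,
    smul_apply, ContinuousLinearMap.comp_apply, inner_sub_right,
    inner_smul_right, v.inner_apply_of_apply_eq_smul _ (hatHinv_apply_basis v lam q ρ),
    v.inner_apply_of_apply_eq_smul H hH]
  ring

end Eigenbasis

theorem stmt2_general (n q : ℕ) (hq : q ≤ n)
    (H : EuclideanSpace ℝ (Fin (n + 1)) →L[ℝ] EuclideanSpace ℝ (Fin (n + 1)))
    (v : OrthonormalBasis (Fin (n + 1)) ℝ (EuclideanSpace ℝ (Fin (n + 1))))
    (lam : Fin (n + 1) → ℝ)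
    (hpos : ∀ i, 0 < lam i)
    (hH : ∀ k, H (v k) = lam k • v k) :
    ∀ (z : EuclideanSpace ℝ (Fin (n + 1))) (ρ η : ℝ),
      lam (Fin.last n) ≤ ρ → ρ ≤ lam ⟨q, Nat.lt_succ_of_le hq⟩ →
      η = 2 * ρ / (lam ⟨q, Nat.lt_succ_of_le hq⟩ + lam (Fin.last n)) →
      ‖iterMat H v lam q ((lam ⟨q, Nat.lt_succ_of_le hq⟩ + lam (Fin.last n)) / 2) 1 z‖ ≤
        ‖iterMat H v lam q ρ η z‖ := by
  intro z ρ η hρ _ hη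
  refine v.norm_le_norm_of_forall_norm_inner_le fun k => ?_
  rw [inner_iterMat_apply v lam q hH, inner_iterMat_apply v lam q hH]
  by_cases hk : (k : ℕ) < q
  · simp only [hk, if_true, one_mul, inv_mul_cancel₀ (hpos k).ne', sub_self, zero_mul, norm_zero]
    exact norm_nonneg _
  · have hρ_pos : 0 < ρ := (hpos _).trans_le hρ
    have hstep : η * ρ⁻¹ = ((lam ⟨q, Nat.lt_succ_of_le hq⟩ + lam (Fin.last n)) / 2)⁻¹ := by
      rw [hη]
      field_simp
    simp only [hk, if_false, one_mul, hstep, le_refl]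

/-- among optimal pairs `(ρ,η) ∈ S*`, the choice `(ρ*, 1)` minimizes the
estimation error for every vector `z`. -/
theorem stmt2 (n q : ℕ) (hq : q ≤ n)
    (H : EuclideanSpace ℝ (Fin (n + 1)) →L[ℝ] EuclideanSpace ℝ (Fin (n + 1)))
    (v : OrthonormalBasis (Fin (n + 1)) ℝ (EuclideanSpace ℝ (Fin (n + 1))))
    (lam : Fin (n + 1) → ℝ)
    (hmono : ∀ i j : Fin (n + 1), i ≤ j → lam j ≤ lam i)
    (hpos : ∀ i, 0 < lam i)
    (hH : ∀ k, H (v k) = lam k • v k) :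
    ∀ (z : EuclideanSpace ℝ (Fin (n + 1))) (ρ η : ℝ),
      lam (Fin.last n) ≤ ρ → ρ ≤ lam ⟨q, Nat.lt_succ_of_le hq⟩ →
      η = 2 * ρ / (lam ⟨q, Nat.lt_succ_of_le hq⟩ + lam (Fin.last n)) →
      ‖iterMat H v lam q ((lam ⟨q, Nat.lt_succ_of_le hq⟩ + lam (Fin.last n)) / 2) 1 z‖ ≤
        ‖iterMat H v lam q ρ η z‖ :=
  stmt2_general n q hq H v lam hpos hH
end

section
/- Let H⁽ⁱ⁾, i = 1,...,M, be symmetric positive definite n×n matrices with eigenvalues λ₁⁽ⁱ⁾ ≥ ... ≥ λₙ⁽ⁱ⁾ > 0. Let Ĥ⁽ⁱ⁾ be the approximation of H⁽ⁱ⁾ using its top q⁽ⁱ⁾ eigenpairs and approximation parameter ρ⁽ⁱ⁾ = (λ_{q⁽ⁱ⁾+1}⁽ⁱ⁾ + λₙ⁽ⁱ⁾)/2. Let Ĥ = (1/M)Σᵢ Ĥ⁽ⁱ⁾ and H = (1/M)Σᵢ H⁽ⁱ⁾. Then ‖I − Ĥ^{-1}H‖ ≤ 1 − λ̄ₙ/ρ̄,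 where ρ̄ = (1/M)Σᵢ ρ⁽ⁱ⁾ and λ̄ₙ = (1/M)Σᵢ λₙ⁽ⁱ⁾. -/
open scoped RealInnerProductSpace

/-!
Since `Ĥ⁽ⁱ⁾` and `H⁽ⁱ⁾` are diagonal in the same orthonormal eigenbasis, `Ĥ⁽ⁱ⁾ − H⁽ⁱ⁾` is diagonal
with entries `0` (for the kept eigenpairs) and `ρ⁽ⁱ⁾ − λ_k⁽ⁱ⁾`; the choice of `ρ⁽ⁱ⁾` as the midpoint
of `[λₙ⁽ⁱ⁾, λ_{q+1}⁽ⁱ⁾]` makes all these entries at most `ρ⁽ⁱ⁾ − λₙ⁽ⁱ⁾` in absolute value, and averaging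
gives `‖Ĥ − H‖ ≤ ρ̄ − λ̄ₙ`. Every diagonal entry of `Ĥ⁽ⁱ⁾` is at least `ρ⁽ⁱ⁾`, so `⟪Ĥx, x⟫ ≥ ρ̄‖x‖²`,
whence `‖Ĥ⁻¹‖ ≤ 1/ρ̄`. Finally `I − Ĥ⁻¹H = Ĥ⁻¹(Ĥ − H)`.
-/

section Coercive

variable {E : Type*} [NormedAddCommGroup E] [InnerProductSpace ℝ E]

lemma mul_norm_le_norm_apply_of_coercive {A : E →L[ℝ] E} {r : ℝ}
    (hA : ∀ x, r * ‖x‖ ^ 2 ≤ ⟪A x, x⟫) (x : E) : r * ‖x‖ ≤ ‖A x‖ := by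
  rcases (norm_nonneg x).eq_or_lt with hx | hx
  · simp [← hx]
  · refine le_of_mul_le_mul_right ?_ hx
    calc r * ‖x‖ * ‖x‖ = r * ‖x‖ ^ 2 := by ring
      _ ≤ ⟪A x, x⟫ := hA x
      _ ≤ ‖A x‖ * ‖x‖ := real_inner_le_norm _ _

lemma norm_le_inv_of_coercive_of_comp_eq_id {A B : E →L[ℝ] E} {r : ℝ} (hr : 0 < r)
    (hA : ∀ x, r * ‖x‖ ^ 2 ≤ ⟪A x, x⟫) (hAB : A.comp B = ContinuousLinearMap.id ℝ E) :
    ‖B‖ ≤ r⁻¹ := by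
  refine B.opNorm_le_bound (inv_nonneg.mpr hr.le) fun x => ?_
  rw [le_inv_mul_iff₀ hr]
  simpa [← ContinuousLinearMap.comp_apply, hAB] using mul_norm_le_norm_apply_of_coercive hA (B x)

lemma norm_id_sub_comp_le {A B H : E →L[ℝ] E} {r d : ℝ} (hr : 0 < r)
    (hA : ∀ x, r * ‖x‖ ^ 2 ≤ ⟪A x, x⟫) (hBA : B.comp A = ContinuousLinearMap.id ℝ E)
    (hAB : A.comp B = ContinuousLinearMap.id ℝ E) (hAH : ‖A - H‖ ≤ d) :
    ‖ContinuousLinearMap.id ℝ E - B.comp H‖ ≤ r⁻¹ * d := by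
  rw [← hBA, ← ContinuousLinearMap.comp_sub]
  calc ‖B.comp (A - H)‖ ≤ ‖B‖ * ‖A - H‖ := B.opNorm_comp_le _
    _ ≤ r⁻¹ * d :=
      mul_le_mul (norm_le_inv_of_coercive_of_comp_eq_id hr hA hAB) hAH (norm_nonneg _)
        (inv_nonneg.mpr hr.le)

lemma mul_sum_mul_norm_sq_le_inner_smul_sum {ι : Type*} (s : Finset ι) {c : ℝ} (hc : 0 ≤ c)
    {A : ι → E →L[ℝ] E} {r : ι → ℝ} (hA : ∀ i, ∀ x, r i * ‖x‖ ^ 2 ≤ ⟪A i x, x⟫) (x : E) :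
    (c * ∑ i ∈ s, r i) * ‖x‖ ^ 2 ≤ ⟪(c • ∑ i ∈ s, A i) x, x⟫ := by
  rw [smul_apply, real_inner_smul_left, sum_apply, sum_inner, mul_assoc, Finset.sum_mul]
  exact mul_le_mul_of_nonneg_left (Finset.sum_le_sum fun i _ => hA i x) hc

end Coercive

lemma norm_smul_sum_sub_smul_sum_le {ι F : Type*} [SeminormedAddCommGroup F] [NormedSpace ℝ F]
    (s : Finset ι) {c : ℝ} (hc : 0 ≤ c) {f g : ι → F} {b : ι → ℝ}
    (hfg : ∀ i, ‖f i - g i‖ ≤ b i) :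
    ‖c • ∑ i ∈ s, f i - c • ∑ i ∈ s, g i‖ ≤ c * ∑ i ∈ s, b i := by
  rw [← smul_sub, ← Finset.sum_sub_distrib, norm_smul, Real.norm_of_nonneg hc]
  exact mul_le_mul_of_nonneg_left
    ((norm_sum_le _ _).trans (Finset.sum_le_sum fun i _ => hfg i)) hc

section Diagonal

variable {ι : Type*} [Fintype ι] {n : ℕ}

noncomputable def diagCL (v : OrthonormalBasis ι ℝ (EuclideanSpace ℝ (Fin n))) (c : ι → ℝ) :
    EuclideanSpace ℝ (Fin n) →L[ℝ] EuclideanSpace ℝ (Fin n) :=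
  ∑ k, c k • projCL (v k)

variable (v : OrthonormalBasis ι ℝ (EuclideanSpace ℝ (Fin n)))

lemma diagCL_apply (c : ι → ℝ) (x : EuclideanSpace ℝ (Fin n)) :
    diagCL v c x = ∑ k, (c k * ⟪v k, x⟫) • v k := by
  simp [diagCL, projCL, sum_apply, mul_smul]

lemma inner_diagCL_apply_self (c : ι → ℝ) (x : EuclideanSpace ℝ (Fin n)) :
    ⟪diagCL v c x, x⟫ = ∑ k, c k * ⟪v k, x⟫ ^ 2 := by
  simp only [diagCL_apply, sum_inner, real_inner_smul_left]
  exact Finset.sum_congr rfl fun k _ => by ring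

lemma norm_diagCL_apply_sq (c : ι → ℝ) (x : EuclideanSpace ℝ (Fin n)) :
    ‖diagCL v c x‖ ^ 2 = ∑ k, (c k * ⟪v k, x⟫) ^ 2 := by
  rw [← real_inner_self_eq_norm_sq, diagCL_apply, v.orthonormal.inner_sum]
  simp [sq]

lemma diagCL_sub (c d : ι → ℝ) : diagCL v c - diagCL v d = diagCL v (c - d) := by
  simp only [diagCL, ← Finset.sum_sub_distrib, Pi.sub_apply]
  exact Finset.sum_congr rfl fun k _ => (sub_smul _ _ _).symm

lemma norm_diagCL_le {c : ι → ℝ} {C : ℝ} (hC : 0 ≤ C) (hc : ∀ k, |c k| ≤ C) :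
    ‖diagCL v c‖ ≤ C := by
  refine (diagCL v c).opNorm_le_bound hC fun x => le_of_sq_le_sq ?_ (by positivity)
  rw [norm_diagCL_apply_sq, mul_pow, ← v.sum_sq_inner_right x, Finset.mul_sum]
  refine Finset.sum_le_sum fun k _ => ?_
  rw [mul_pow]
  exact mul_le_mul_of_nonneg_right (sq_le_sq' (abs_le.mp (hc k)).1 (abs_le.mp (hc k)).2)
    (sq_nonneg _)

lemma mul_norm_sq_le_inner_diagCL {c : ι → ℝ} {r : ℝ} (hc : ∀ k, r ≤ c k)
    (x : EuclideanSpace ℝ (Fin n)) : r * ‖x‖ ^ 2 ≤ ⟪diagCL v c x, x⟫ := by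
  rw [inner_diagCL_apply_self, ← v.sum_sq_inner_right x, Finset.mul_sum]
  exact Finset.sum_le_sum fun k _ => mul_le_mul_of_nonneg_right (hc k) (sq_nonneg _)

lemma eq_diagCL_of_apply_eq_smul {c : ι → ℝ}
    {T : EuclideanSpace ℝ (Fin n) →L[ℝ] EuclideanSpace ℝ (Fin n)}
    (hT : ∀ k, T (v k) = c k • v k) : T = diagCL v c := by
  classical
  refine ContinuousLinearMap.coe_injective (v.toBasis.ext fun j => ?_)
  simp [hT, diagCL_apply, orthonormal_iff_ite.mp v.orthonormal, ite_smul]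

end Diagonal

section Truncated

variable {n : ℕ} (v : OrthonormalBasis (Fin (n + 1)) ℝ (EuclideanSpace ℝ (Fin (n + 1))))
  {lam : Fin (n + 1) → ℝ} (q : Fin (n + 1))

lemma mul_norm_sq_le_inner_hatH (hlam : Antitone lam) {ρ : ℝ} (hρ : ρ ≤ lam q)
    (x : EuclideanSpace ℝ (Fin (n + 1))) : ρ * ‖x‖ ^ 2 ≤ ⟪hatH v lam q ρ x, x⟫ := by
  refine mul_norm_sq_le_inner_diagCL v (fun k => ?_) x
  split_ifs with hk
  · exact hρ.trans (hlam (Fin.lt_def.mpr hk).le)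
  · exact le_rfl

lemma norm_hatH_sub_le (hlam : Antitone lam) {ρ : ℝ} (hρ : ρ = (lam q + lam (Fin.last n)) / 2)
    {T : EuclideanSpace ℝ (Fin (n + 1)) →L[ℝ] EuclideanSpace ℝ (Fin (n + 1))}
    (hT : ∀ k, T (v k) = lam k • v k) :
    ‖hatH v lam q ρ - T‖ ≤ ρ - lam (Fin.last n) := by
  have hlast_le_q : lam (Fin.last n) ≤ lam q := hlam (Fin.le_last q)
  rw [eq_diagCL_of_apply_eq_smul v hT, hatH, ← diagCL, diagCL_sub]
  refine norm_diagCL_le v (by linarith) fun k => ?_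
  have hlast_le_k : lam (Fin.last n) ≤ lam k := hlam (Fin.le_last k)
  simp only [Pi.sub_apply]
  split_ifs with hk
  · rw [sub_self, abs_zero]
    linarith
  · have hk_le_q : lam k ≤ lam q := hlam (Fin.not_lt.mp (mt Fin.lt_def.mp hk))
    rw [abs_le]
    constructor <;> linarith

end Truncated

/-- federated approximation.  With `M+1` agents, local eigenpairs and
`ρ⁽ⁱ⁾ = (λ_{q⁽ⁱ⁾+1}⁽ⁱ⁾ + λ_n⁽ⁱ⁾)/2`, the averaged approximation `Ĥ` satisfies
`‖I − Ĥ⁻¹H‖ ≤ 1 − λ̄_n/ρ̄`. -/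
theorem stmt3 (n M : ℕ) (q : Fin (M + 1) → ℕ) (hq : ∀ i, q i ≤ n)
    (v : Fin (M + 1) → OrthonormalBasis (Fin (n + 1)) ℝ (EuclideanSpace ℝ (Fin (n + 1))))
    (lam : Fin (M + 1) → Fin (n + 1) → ℝ)
    (Hi : Fin (M + 1) → (EuclideanSpace ℝ (Fin (n + 1)) →L[ℝ] EuclideanSpace ℝ (Fin (n + 1))))
    (hmono : ∀ i, ∀ k l : Fin (n + 1), k ≤ l → lam i l ≤ lam i k)
    (hpos : ∀ i k, 0 < lam i k)
    (hHi : ∀ i k, Hi i (v i k) = lam i k • v i k)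
    (ρi : Fin (M + 1) → ℝ)
    (hρi : ∀ i, ρi i = (lam i ⟨q i, Nat.lt_succ_of_le (hq i)⟩ + lam i (Fin.last n)) / 2)
    (H Hhat HhatInv : EuclideanSpace ℝ (Fin (n + 1)) →L[ℝ] EuclideanSpace ℝ (Fin (n + 1)))
    (hH : H = ((M : ℝ) + 1)⁻¹ • ∑ i, Hi i)
    (hHhat : Hhat = ((M : ℝ) + 1)⁻¹ • ∑ i, hatH (v i) (lam i) (q i) (ρi i))
    (hinv₁ : HhatInv.comp Hhat = ContinuousLinearMap.id ℝ _)
    (hinv₂ : Hhat.comp HhatInv = ContinuousLinearMap.id ℝ _) :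
    ‖ContinuousLinearMap.id ℝ (EuclideanSpace ℝ (Fin (n + 1))) - HhatInv.comp H‖ ≤
      1 - (((M : ℝ) + 1)⁻¹ * ∑ i, lam i (Fin.last n)) / (((M : ℝ) + 1)⁻¹ * ∑ i, ρi i) := by
  set c : ℝ := ((M : ℝ) + 1)⁻¹
  have hc : 0 < c := by positivity
  have hlast_le_q : ∀ i, lam i (Fin.last n) ≤ lam i ⟨q i, Nat.lt_succ_of_le (hq i)⟩ :=
    fun i => hmono i _ _ (Fin.le_last _)
  have hρ_le : ∀ i, ρi i ≤ lam i ⟨q i, Nat.lt_succ_of_le (hq i)⟩ := fun i => by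
    linarith [hρi i, hlast_le_q i]
  have hρbar : 0 < c * ∑ i, ρi i := mul_pos hc <| Finset.sum_pos
    (fun i _ => by linarith [hρi i, hlast_le_q i, hpos i (Fin.last n)]) Finset.univ_nonempty
  have hcoer : ∀ x, (c * ∑ i, ρi i) * ‖x‖ ^ 2 ≤ ⟪Hhat x, x⟫ := by
    rw [hHhat]
    exact mul_sum_mul_norm_sq_le_inner_smul_sum _ hc.le fun i =>
      mul_norm_sq_le_inner_hatH (v i) ⟨q i, Nat.lt_succ_of_le (hq i)⟩ (hmono i) (hρ_le i)
  have hdist : ‖Hhat - H‖ ≤ c * ∑ i, (ρi i - lam i (Fin.last n)) := by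
    rw [hHhat, hH]
    exact norm_smul_sum_sub_smul_sum_le _ hc.le fun i =>
      norm_hatH_sub_le (v i) ⟨q i, Nat.lt_succ_of_le (hq i)⟩ (hmono i) (hρi i) (hHi i)
  calc _ ≤ (c * ∑ i, ρi i)⁻¹ * (c * ∑ i, (ρi i - lam i (Fin.last n))) :=
        norm_id_sub_comp_le hρbar hcoer hinv₁ hinv₂ hdist
    _ = _ := by
      rw [Finset.sum_sub_distrib, mul_sub, inv_mul_eq_div, sub_div, div_self hρbar.ne']
end

section
/- Under the setup of the federated least-squares contraction bound, the update θ^{t+1} = θ^t − Ĥₜ^{-1}H(θ^t − θ*) + θ* satisfies ‖θ^{t+1} − θ*‖ ≤ (1 − λ̄ₙ/ρ̄ₜ)‖θ^t − θ*‖, and if at some iteration t' every agent has sent all n−1 leading eigenpairs (q^{(i)} = n−1 for all i), the contraction factor equals 0, i.e., θ^{t'+1} = θ*. -/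
open scoped RealInnerProductSpace

section Helpers

variable {m : ℕ}

lemma sumProj_apply (v : OrthonormalBasis (Fin m) ℝ (EuclideanSpace ℝ (Fin m)))
    (c : Fin m → ℝ) (x : EuclideanSpace ℝ (Fin m)) :
    (∑ k, c k • projCL (v k)) x = ∑ k, (c k * ⟪v k, x⟫) • v k := by
  simp [projCL, ContinuousLinearMap.sum_apply, smul_smul]

lemma parseval (v : OrthonormalBasis (Fin m) ℝ (EuclideanSpace ℝ (Fin m)))
    (x : EuclideanSpace ℝ (Fin m)) :
    ∑ k, ⟪v k, x⟫ ^ 2 = ‖x‖ ^ 2 := by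
  have h := v.orthonormal.inner_sum (fun k => ⟪v k, x⟫) (fun k => ⟪v k, x⟫) Finset.univ
  simp only [v.sum_repr' x] at h
  rw [real_inner_self_eq_norm_sq] at h
  simpa [sq, starRingEnd_apply] using h.symm

lemma norm_comb_le (v : OrthonormalBasis (Fin m) ℝ (EuclideanSpace ℝ (Fin m)))
    (c : Fin m → ℝ) (C : ℝ) (hC : 0 ≤ C) (h : ∀ k, |c k| ≤ C)
    (x : EuclideanSpace ℝ (Fin m)) :
    ‖∑ k, (c k * ⟪v k, x⟫) • v k‖ ≤ C * ‖x‖ := by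
  have h1 : ‖∑ k, (c k * ⟪v k, x⟫) • v k‖ ^ 2 = ∑ k, (c k * ⟪v k, x⟫) ^ 2 := by
    have h := v.orthonormal.inner_sum (fun k => c k * ⟪v k, x⟫) (fun k => c k * ⟪v k, x⟫)
      Finset.univ
    rw [real_inner_self_eq_norm_sq] at h
    simpa [sq, starRingEnd_apply] using h
  have h2 : ∑ k, (c k * ⟪v k, x⟫) ^ 2 ≤ C ^ 2 * ‖x‖ ^ 2 := by
    rw [← parseval v x, Finset.mul_sum]
    refine Finset.sum_le_sum fun k _ => ?_
    rw [mul_pow]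
    have : (c k) ^ 2 ≤ C ^ 2 := by
      have := h k
      nlinarith [abs_nonneg (c k), sq_abs (c k)]
    nlinarith [sq_nonneg (⟪v k, x⟫ : ℝ)]
  have h3 : ‖∑ k, (c k * ⟪v k, x⟫) • v k‖ ^ 2 ≤ (C * ‖x‖) ^ 2 := by
    rw [h1, mul_pow]; exact h2
  nlinarith [norm_nonneg (∑ k, (c k * ⟪v k, x⟫) • v k), mul_nonneg hC (norm_nonneg x)]

lemma inner_comb_ge (v : OrthonormalBasis (Fin m) ℝ (EuclideanSpace ℝ (Fin m)))
    (c : Fin m → ℝ) (mo : ℝ) (h : ∀ k, mo ≤ c k) (x : EuclideanSpace ℝ (Fin m)) :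
    mo * ‖x‖ ^ 2 ≤ ⟪∑ k, (c k * ⟪v k, x⟫) • v k, x⟫ := by
  have h0 : ⟪∑ k, (c k * ⟪v k, x⟫) • v k, x⟫ = ∑ k, c k * ⟪v k, x⟫ ^ 2 := by
    have h := v.orthonormal.inner_sum (fun k => c k * ⟪v k, x⟫) (fun k => ⟪v k, x⟫)
      Finset.univ
    rw [v.sum_repr' x] at h
    simpa [sq, starRingEnd_apply, mul_assoc] using h
  rw [h0, ← parseval v x, Finset.mul_sum]
  exact Finset.sum_le_sum fun k _ => mul_le_mul_of_nonneg_right (h k) (sq_nonneg _)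

end Helpers

/-- federated least-squares contraction.  The Newton-type update
`θ' = θ − Ĥ⁻¹H(θ − θ*)` contracts with factor `1 − λ̄_n/ρ̄`, and if every agent has
sent all its leading eigenpairs (`q⁽ⁱ⁾` maximal, so `Ĥ⁽ⁱ⁾ = H⁽ⁱ⁾`), the factor is `0`
and `θ' = θ*`. -/
theorem stmt4 (n M : ℕ) (q : Fin (M + 1) → ℕ) (hq : ∀ i, q i ≤ n)
    (v : Fin (M + 1) → OrthonormalBasis (Fin (n + 1)) ℝ (EuclideanSpace ℝ (Fin (n + 1))))
    (lam : Fin (M + 1) → Fin (n + 1) → ℝ)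
    (Hi : Fin (M + 1) → (EuclideanSpace ℝ (Fin (n + 1)) →L[ℝ] EuclideanSpace ℝ (Fin (n + 1))))
    (hmono : ∀ i, ∀ k l : Fin (n + 1), k ≤ l → lam i l ≤ lam i k)
    (hpos : ∀ i k, 0 < lam i k)
    (hHi : ∀ i k, Hi i (v i k) = lam i k • v i k)
    (ρi : Fin (M + 1) → ℝ)
    (hρi : ∀ i, ρi i = (lam i ⟨q i, Nat.lt_succ_of_le (hq i)⟩ + lam i (Fin.last n)) / 2)
    (H Hhat HhatInv : EuclideanSpace ℝ (Fin (n + 1)) →L[ℝ] EuclideanSpace ℝ (Fin (n + 1)))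
    (hH : H = ((M : ℝ) + 1)⁻¹ • ∑ i, Hi i)
    (hHhat : Hhat = ((M : ℝ) + 1)⁻¹ • ∑ i, hatH (v i) (lam i) (q i) (ρi i))
    (hinv₁ : HhatInv.comp Hhat = ContinuousLinearMap.id ℝ _)
    (hinv₂ : Hhat.comp HhatInv = ContinuousLinearMap.id ℝ _)
    (θt θstar : EuclideanSpace ℝ (Fin (n + 1))) :
    ‖(θt - HhatInv (H (θt - θstar))) - θstar‖ ≤
        (1 - (((M : ℝ) + 1)⁻¹ * ∑ i, lam i (Fin.last n)) / (((M : ℝ) + 1)⁻¹ * ∑ i, ρi i)) *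
          ‖θt - θstar‖ ∧
    ((∀ i, q i = n) → θt - HhatInv (H (θt - θstar)) = θstar) := by
  classical
  set x : EuclideanSpace ℝ (Fin (n + 1)) := θt - θstar with hxdef
  set A : ℝ := ((M : ℝ) + 1)⁻¹ with hAdef
  have hApos : 0 < A := by
    rw [hAdef]; positivity
  -- basic eigenvalue facts
  have hlast_le : ∀ i (k : Fin (n + 1)), lam i (Fin.last n) ≤ lam i k :=
    fun i k => hmono i k (Fin.last n) (Fin.le_last k)
  have hρ_ge : ∀ i, lam i (Fin.last n) ≤ ρi i := by
    intro i
    rw [hρi]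
    linarith [hlast_le i ⟨q i, Nat.lt_succ_of_le (hq i)⟩]
  have hρpos : ∀ i, 0 < ρi i := fun i => lt_of_lt_of_le (hpos i (Fin.last n)) (hρ_ge i)
  set Sρ : ℝ := ∑ i, ρi i with hSρ
  set SL : ℝ := ∑ i, lam i (Fin.last n) with hSL
  have hSρpos : 0 < Sρ := Finset.sum_pos (fun i _ => hρpos i) Finset.univ_nonempty
  have hSle : SL ≤ Sρ := Finset.sum_le_sum fun i _ => hρ_ge i
  -- apply formulas
  set μ : Fin (M + 1) → Fin (n + 1) → ℝ :=
    fun i k => if (k : ℕ) < q i then lam i k else ρi i with hμ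
  have hHatApp : ∀ i y, hatH (v i) (lam i) (q i) (ρi i) y =
      ∑ k, (μ i k * ⟪v i k, y⟫) • v i k := by
    intro i y
    rw [hatH]
    exact sumProj_apply (v i) (μ i) y
  have hHiApp : ∀ i y, Hi i y = ∑ k, (lam i k * ⟪v i k, y⟫) • v i k := by
    intro i y
    conv_lhs => rw [← (v i).sum_repr' y, map_sum]
    refine Finset.sum_congr rfl fun k _ => ?_
    rw [map_smul, hHi, smul_smul, mul_comm]
  have hdiff : ∀ i y, hatH (v i) (lam i) (q i) (ρi i) y - Hi i y =
      ∑ k, ((μ i k - lam i k) * ⟪v i k, y⟫) • v i k := by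
    intro i y
    rw [hHatApp, hHiApp, ← Finset.sum_sub_distrib]
    exact Finset.sum_congr rfl fun k _ => by rw [← sub_smul, ← sub_mul]
  have hdiffnorm : ∀ i y, ‖hatH (v i) (lam i) (q i) (ρi i) y - Hi i y‖ ≤
      (ρi i - lam i (Fin.last n)) * ‖y‖ := by
    intro i y
    rw [hdiff]
    refine norm_comb_le (v i) _ _ (by linarith [hρ_ge i]) (fun k => ?_) y
    by_cases hk : (k : ℕ) < q i
    · simp [hμ, hk, sub_self]
      linarith [hρ_ge i]
    · have hk1 : (⟨q i, Nat.lt_succ_of_le (hq i)⟩ : Fin (n + 1)) ≤ k := by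
        rw [Fin.le_def]; exact le_of_not_gt hk
      have h2 : lam i k ≤ lam i ⟨q i, Nat.lt_succ_of_le (hq i)⟩ := hmono i _ _ hk1
      have h3 : lam i (Fin.last n) ≤ lam i k := hlast_le i k
      have := hρi i
      rw [abs_le]
      constructor <;> simp [hμ, hk] <;> linarith
  -- coercivity
  have hcoer : ∀ y, (A * Sρ) * ‖y‖ ^ 2 ≤ ⟪Hhat y, y⟫ := by
    intro y
    have happ : Hhat y = A • ∑ i, hatH (v i) (lam i) (q i) (ρi i) y := by
      rw [hHhat]
      simp [ContinuousLinearMap.sum_apply]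
    rw [happ, real_inner_smul_left, sum_inner]
    have : ∀ i ∈ Finset.univ, ρi i * ‖y‖ ^ 2 ≤ ⟪hatH (v i) (lam i) (q i) (ρi i) y, y⟫ := by
      intro i _
      rw [hHatApp]
      refine inner_comb_ge (v i) (μ i) (ρi i) (fun k => ?_) y
      by_cases hk : (k : ℕ) < q i
      · have hk1 : k ≤ (⟨q i, Nat.lt_succ_of_le (hq i)⟩ : Fin (n + 1)) := by
          rw [Fin.le_def]; exact le_of_lt hk
        have h2 : lam i ⟨q i, Nat.lt_succ_of_le (hq i)⟩ ≤ lam i k := hmono i _ _ hk1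
        have h3 := hρ_ge i
        have := hρi i
        simp only [hμ, hk, if_true]
        linarith [hlast_le i ⟨q i, Nat.lt_succ_of_le (hq i)⟩]
      · simp [hμ, hk]
    have hsum := Finset.sum_le_sum this
    rw [← Finset.sum_mul] at hsum
    calc (A * Sρ) * ‖y‖ ^ 2 = A * (Sρ * ‖y‖ ^ 2) := by ring
    _ ≤ A * ∑ i, ⟪hatH (v i) (lam i) (q i) (ρi i) y, y⟫ :=
        mul_le_mul_of_nonneg_left hsum hApos.le
  -- inverse bound
  have hInvNorm : ∀ z, ‖HhatInv z‖ ≤ (A * Sρ)⁻¹ * ‖z‖ := by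
    intro z
    have hw : Hhat (HhatInv z) = z := by
      have := ContinuousLinearMap.ext_iff.mp hinv₂ z
      simpa using this
    have h1 := hcoer (HhatInv z)
    rw [hw] at h1
    have h2 : ⟪z, HhatInv z⟫ ≤ ‖z‖ * ‖HhatInv z‖ := real_inner_le_norm _ _
    have hc : 0 < A * Sρ := mul_pos hApos hSρpos
    rw [inv_mul_eq_div, le_div_iff₀ hc]
    nlinarith [norm_nonneg (HhatInv z), norm_nonneg z]
  -- difference bound
  have hdn : ‖Hhat x - H x‖ ≤ (A * (Sρ - SL)) * ‖x‖ := by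
    have happ : Hhat x - H x = A • ∑ i, (hatH (v i) (lam i) (q i) (ρi i) x - Hi i x) := by
      rw [hH, hHhat, Finset.sum_sub_distrib]
      simp [ContinuousLinearMap.sum_apply, smul_sub]
    rw [happ, norm_smul, Real.norm_eq_abs, abs_of_pos hApos]
    have h1 : ‖∑ i, (hatH (v i) (lam i) (q i) (ρi i) x - Hi i x)‖ ≤ (Sρ - SL) * ‖x‖ := by
      refine le_trans (norm_sum_le _ _) ?_
      rw [hSρ, hSL, ← Finset.sum_sub_distrib, Finset.sum_mul]
      exact Finset.sum_le_sum fun i _ => hdiffnorm i x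
    calc A * ‖∑ i, (hatH (v i) (lam i) (q i) (ρi i) x - Hi i x)‖ ≤ A * ((Sρ - SL) * ‖x‖) :=
        mul_le_mul_of_nonneg_left h1 hApos.le
    _ = (A * (Sρ - SL)) * ‖x‖ := by ring
  -- key rewriting
  have hid : HhatInv (Hhat x) = x := by
    have := ContinuousLinearMap.ext_iff.mp hinv₁ x
    simpa using this
  have hkey : (θt - HhatInv (H x)) - θstar = HhatInv (Hhat x - H x) := by
    rw [show HhatInv (Hhat x - H x) = HhatInv (Hhat x) - HhatInv (H x) from map_sub _ _ _, hid,
      hxdef]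
    abel
  constructor
  · rw [hkey]
    refine le_trans (hInvNorm _) (le_trans (mul_le_mul_of_nonneg_left hdn (by positivity)) ?_)
    have heq : (A * Sρ)⁻¹ * ((A * (Sρ - SL)) * ‖x‖) = (1 - (A * SL) / (A * Sρ)) * ‖x‖ := by
      have hA0 : A ≠ 0 := ne_of_gt hApos
      have hS0 : Sρ ≠ 0 := ne_of_gt hSρpos
      field_simp
      try exact Or.inl trivial
      try trivial
    rw [heq]
  · intro hqn
    have hrL : ∀ i, ρi i = lam i (Fin.last n) := by
      intro i
      rw [hρi]
      have hql : (⟨q i, Nat.lt_succ_of_le (hq i)⟩ : Fin (n + 1)) = Fin.last n := by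
        ext
        simp [hqn i]
      rw [hql]
      ring
    have hTH : ∀ i y, hatH (v i) (lam i) (q i) (ρi i) y = Hi i y := by
      intro i y
      rw [hHatApp, hHiApp]
      refine Finset.sum_congr rfl fun k _ => ?_
      congr 2
      by_cases hk : (k : ℕ) < q i
      · simp only [hμ]
        rw [if_pos hk]
      · have hkl : k = Fin.last n := by
          have h1 := k.isLt
          have h2 := hqn i
          ext
          simp only [Fin.val_last]
          omega
        simp only [hμ]
        rw [if_neg hk, hrL i, hkl]
    have hHH : Hhat x = H x := by
      rw [hH, hHhat]
      simp only [ContinuousLinearMap.smul_apply, ContinuousLinearMap.sum_apply]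
      congr 1
      exact Finset.sum_congr rfl fun i _ => hTH i x
    have : HhatInv (H x) = x := by rw [← hHH, hid]
    rw [this, hxdef]
    abel
end

section
/- Consider the quadratic cost f(θ) = f(θ*) + ½(θ−θ*)ᵀH(θ−θ*) with H symmetric positive definite, and a descent direction p = Ĥ^{-1}g where g = H(θ−θ*) and Ĥ is symmetric positive definite. If the step size η > 0 satisfies Ĥ − ηH ⪰ 0, then for every α ∈ (0, 1/2) the Armijo–Goldstein condition f(θ − ηp) ≤ f(θ) − α η pᵀg holds. -/
open scoped RealInnerProductSpace

namespace LinearMap.IsSymmetric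

variable {E : Type*} [NormedAddCommGroup E] [InnerProductSpace ℝ E] {H : E →ₗ[ℝ] E}

theorem inner_sub_smul_map_sub_smul (hH : H.IsSymmetric) (d p : E) (η : ℝ) :
    ⟪d - η • p, H (d - η • p)⟫ = ⟪d, H d⟫ - 2 * η * ⟪p, H d⟫ + η ^ 2 * ⟪p, H p⟫ := by
  simp only [map_sub, map_smul, inner_sub_left, inner_sub_right, inner_smul_left,
    inner_smul_right, RCLike.conj_to_real]
  rw [← hH p d, real_inner_comm d (H p)]
  ring

/-- Armijo–Goldstein for the quadratic `x ↦ ½⟪x, H x⟫`: by `hcurv` the second-order term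
`η²/2 ⟪p, H p⟫` eats at most half of the first-order decrease `η ⟪p, H d⟫`. -/
theorem half_inner_sub_smul_le (hH : H.IsSymmetric) {d p : E} {η α : ℝ} (hη : 0 ≤ η)
    (hcurv : η * ⟪p, H p⟫ ≤ ⟪p, H d⟫) (hdesc : 0 ≤ ⟪p, H d⟫) (hα : α ≤ 1 / 2) :
    1 / 2 * ⟪d - η • p, H (d - η • p)⟫ ≤ 1 / 2 * ⟪d, H d⟫ - α * η * ⟪p, H d⟫ := by
  have hquad : η ^ 2 * ⟪p, H p⟫ ≤ η * ⟪p, H d⟫ := by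
    rw [pow_two, mul_assoc]
    exact mul_le_mul_of_nonneg_left hcurv hη
  have hlin : α * η * ⟪p, H d⟫ ≤ 1 / 2 * η * ⟪p, H d⟫ := by
    gcongr
  rw [hH.inner_sub_smul_map_sub_smul]
  linarith

end LinearMap.IsSymmetric

theorem stmt5_general (n : ℕ)
    (H Hhat HhatInv : EuclideanSpace ℝ (Fin (n + 1)) →L[ℝ] EuclideanSpace ℝ (Fin (n + 1)))
    (hHsa : IsSelfAdjoint H)
    (hHhatpd : ∀ x : EuclideanSpace ℝ (Fin (n + 1)), x ≠ 0 → 0 < (inner ℝ x (Hhat x) : ℝ))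
    (hinv₂ : Hhat.comp HhatInv = ContinuousLinearMap.id ℝ _)
    (θ θstar : EuclideanSpace ℝ (Fin (n + 1))) (fstar η : ℝ)
    (hη : 0 < η)
    (hPSD : ∀ x : EuclideanSpace ℝ (Fin (n + 1)), 0 ≤ (inner ℝ x ((Hhat - η • H) x) : ℝ)) :
    ∀ α : ℝ, 0 < α → α < 1 / 2 →
      fstar + (1 / 2) * (inner ℝ ((θ - η • HhatInv (H (θ - θstar))) - θstar)
          (H ((θ - η • HhatInv (H (θ - θstar))) - θstar)) : ℝ) ≤
        (fstar + (1 / 2) * (inner ℝ (θ - θstar) (H (θ - θstar)) : ℝ)) -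
          α * η * (inner ℝ (HhatInv (H (θ - θstar))) (H (θ - θstar)) : ℝ) := by
  intro α _ hα
  set d := θ - θstar
  set p := HhatInv (H d)
  have hHhat_p : Hhat p = H d := congr($hinv₂ (H d))
  have hdesc : 0 ≤ ⟪p, H d⟫ := by
    rw [← hHhat_p]
    rcases eq_or_ne p 0 with hp | hp
    · simp [hp]
    · exact (hHhatpd p hp).le
  have hcurv : η * ⟪p, H p⟫ ≤ ⟪p, H d⟫ := by
    have hPSD_p := hPSD p
    rw [sub_apply, smul_apply, inner_sub_right, inner_smul_right, hHhat_p] at hPSD_p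
    linarith
  have hstep : θ - η • p - θstar = d - η • p := sub_right_comm _ _ _
  have hArmijo : 1 / 2 * ⟪d - η • p, H (d - η • p)⟫ ≤ 1 / 2 * ⟪d, H d⟫ - α * η * ⟪p, H d⟫ :=
    hHsa.isSymmetric.half_inner_sub_smul_le hη.le hcurv hdesc hα.le
  rw [hstep]
  linarith

/-- for the quadratic cost `f(θ) = f* + ½⟪θ−θ*, H(θ−θ*)⟫` and the
direction `p = Ĥ⁻¹g` with `g = H(θ−θ*)`, if `Ĥ − ηH ⪰ 0` (with `η > 0`), then the
Armijo–Goldstein condition holds for every `α ∈ (0, 1/2)`. -/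
theorem stmt5 (n : ℕ)
    (H Hhat HhatInv : EuclideanSpace ℝ (Fin (n + 1)) →L[ℝ] EuclideanSpace ℝ (Fin (n + 1)))
    (hHsa : IsSelfAdjoint H)
    (hHpd : ∀ x : EuclideanSpace ℝ (Fin (n + 1)), x ≠ 0 → 0 < (inner ℝ x (H x) : ℝ))
    (hHhatsa : IsSelfAdjoint Hhat)
    (hHhatpd : ∀ x : EuclideanSpace ℝ (Fin (n + 1)), x ≠ 0 → 0 < (inner ℝ x (Hhat x) : ℝ))
    (hinv₁ : HhatInv.comp Hhat = ContinuousLinearMap.id ℝ _)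
    (hinv₂ : Hhat.comp HhatInv = ContinuousLinearMap.id ℝ _)
    (θ θstar : EuclideanSpace ℝ (Fin (n + 1))) (fstar η : ℝ)
    (hη : 0 < η)
    (hPSD : ∀ x : EuclideanSpace ℝ (Fin (n + 1)), 0 ≤ (inner ℝ x ((Hhat - η • H) x) : ℝ)) :
    ∀ α : ℝ, 0 < α → α < 1 / 2 →
      fstar + (1 / 2) * (inner ℝ ((θ - η • HhatInv (H (θ - θstar))) - θstar)
          (H ((θ - η • HhatInv (H (θ - θstar))) - θstar)) : ℝ) ≤
        (fstar + (1 / 2) * (inner ℝ (θ - θstar) (H (θ - θstar)) : ℝ)) -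
          α * η * (inner ℝ (HhatInv (H (θ - θstar))) (H (θ - θstar)) : ℝ) :=
  stmt5_general n H Hhat HhatInv hHsa hHhatpd hinv₂ θ θstar fstar η hη hPSD
end

section
/- In the federated least-squares setting with Ĥ = (1/M)Σᵢ Ĥ⁽ⁱ⁾ and local approximations Ĥ⁽ⁱ⁾ using parameters ρ⁽ⁱ⁾ ∈ (0, λ_{q⁽ⁱ⁾+1}⁽ⁱ⁾], the step size η = minᵢ ρ⁽ⁱ⁾/λ_{q⁽ⁱ⁾+1}⁽ⁱ⁾ satisfies Ĥ − ηH ⪰ 0, where H = (1/M)Σᵢ H⁽ⁱ⁾; consequently this η satisfies the Armijo–Goldstein condition for any α ∈ (0, 1/2). -/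
open scoped RealInnerProductSpace

/-!
In the eigenbasis of `H⁽ⁱ⁾`, the operator `Ĥ⁽ⁱ⁾ − ηH⁽ⁱ⁾` is diagonal with entries `(1 − η)λ_j` for
`j ≤ q⁽ⁱ⁾` and `ρ⁽ⁱ⁾ − ηλ_j ≥ ρ⁽ⁱ⁾ − ηλ_{q⁽ⁱ⁾+1} ≥ 0` beyond, so it is positive, and so is the
average `Ĥ − ηH`. For the Armijo–Goldstein condition, write `δ = θ − θ*` and `d = Ĥ⁻¹Hδ`: the step
`−ηd` changes the quadratic objective by `−η⟪d, Hδ⟫ + (η²/2)⟪d, Hd⟫`, and `Ĥ ⪰ ηH` gives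
`η⟪d, Hd⟫ ≤ ⟪d, Ĥd⟫ = ⟪d, Hδ⟫`, so the decrease is at least `(η/2)⟪d, Hδ⟫ ≥ αη⟪d, Hδ⟫`.
-/

namespace OrthonormalBasis

variable {ι E : Type*} [Fintype ι] [NormedAddCommGroup E] [InnerProductSpace ℝ E]
  (v : OrthonormalBasis ι ℝ E) {T : E →L[ℝ] E} {a : ι → ℝ}

theorem inner_map_eq_sum_of_apply_eq_smul (hT : ∀ k, T (v k) = a k • v k) (x y : E) :
    ⟪x, T y⟫ = ∑ k, a k * (⟪v k, x⟫ * ⟪v k, y⟫) := by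
  conv_lhs => rw [← v.sum_repr y]
  simp only [map_sum, map_smul, hT, inner_sum, real_inner_smul_right, v.repr_apply_apply,
    real_inner_comm x (v _)]
  exact Finset.sum_congr rfl fun k _ => by ring

theorem isPositive_of_apply_eq_smul (hT : ∀ k, T (v k) = a k • v k) (ha : ∀ k, 0 ≤ a k) :
    T.IsPositive := by
  refine (T.isPositive_iff).2 ⟨fun x y => ?_, fun x => ?_⟩
  · change ⟪T x, y⟫ = ⟪x, T y⟫
    rw [real_inner_comm, v.inner_map_eq_sum_of_apply_eq_smul hT,
      v.inner_map_eq_sum_of_apply_eq_smul hT]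
    exact Finset.sum_congr rfl fun k _ => by ring
  · rw [real_inner_comm, v.inner_map_eq_sum_of_apply_eq_smul hT]
    exact Finset.sum_nonneg fun k _ => mul_nonneg (ha k) (mul_self_nonneg _)

end OrthonormalBasis

theorem sum_smul_projCL_apply {n : ℕ} (v : OrthonormalBasis (Fin n) ℝ (EuclideanSpace ℝ (Fin n)))
    (c : Fin n → ℝ) (j : Fin n) : (∑ k, c k • projCL (v k)) (v j) = c j • v j := by
  rw [sum_apply, Fintype.sum_eq_single j fun k hk => ?_]
  · simp [projCL]
  · simp [projCL, orthonormal_iff_ite.mp v.orthonormal, hk]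

theorem hatH_apply_basis {n : ℕ} (v : OrthonormalBasis (Fin n) ℝ (EuclideanSpace ℝ (Fin n)))
    (lam : Fin n → ℝ) (q : ℕ) (ρ : ℝ) (j : Fin n) :
    hatH v lam q ρ (v j) = (if (j : ℕ) < q then lam j else ρ) • v j :=
  sum_smul_projCL_apply v _ j

theorem mul_le_ite_of_antitone {m : ℕ} {lam : Fin m → ℝ} (hlam : Antitone lam)
    (hlam_nonneg : ∀ k, 0 ≤ lam k) {η ρ : ℝ} (hη₀ : 0 ≤ η) (hη₁ : η ≤ 1) (j : Fin m)
    (hηρ : η * lam j ≤ ρ) (k : Fin m) :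
    η * lam k ≤ if (k : ℕ) < j then lam k else ρ := by
  split_ifs with hk
  · exact mul_le_of_le_one_left (hlam_nonneg k) hη₁
  · exact (mul_le_mul_of_nonneg_left (hlam (not_lt.mp hk)) hη₀).trans hηρ

theorem isPositive_hatH_sub_smul {m : ℕ}
    (v : OrthonormalBasis (Fin m) ℝ (EuclideanSpace ℝ (Fin m))) {lam : Fin m → ℝ}
    (hlam : Antitone lam) (hlam_nonneg : ∀ k, 0 ≤ lam k)
    {T : EuclideanSpace ℝ (Fin m) →L[ℝ] EuclideanSpace ℝ (Fin m)}
    (hT : ∀ k, T (v k) = lam k • v k) {η ρ : ℝ} (hη₀ : 0 ≤ η) (hη₁ : η ≤ 1) (j : Fin m)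
    (hηρ : η * lam j ≤ ρ) :
    (hatH v lam j ρ - η • T).IsPositive :=
  v.isPositive_of_apply_eq_smul (a := fun k => (if (k : ℕ) < j then lam k else ρ) - η * lam k)
    (fun k => by simp only [sub_apply, smul_apply, hatH_apply_basis, hT, sub_smul, smul_smul])
    (fun k => sub_nonneg.2 (mul_le_ite_of_antitone hlam hlam_nonneg hη₀ hη₁ j hηρ k))

theorem armijo_of_isPositive_sub_smul {E : Type*} [NormedAddCommGroup E] [InnerProductSpace ℝ E]
    {H Hhat P : E →L[ℝ] E} (hH : H.IsPositive) (hP : Hhat.comp P = ContinuousLinearMap.id ℝ E)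
    {η α : ℝ} (hη : 0 ≤ η) (hα : α ≤ 1 / 2) (hgap : (Hhat - η • H).IsPositive)
    (θ θstar : E) (fstar : ℝ) :
    fstar + (1 / 2) *
        ⟪(θ - η • P (H (θ - θstar))) - θstar, H ((θ - η • P (H (θ - θstar))) - θstar)⟫ ≤
      (fstar + (1 / 2) * ⟪θ - θstar, H (θ - θstar)⟫) -
        α * η * ⟪P (H (θ - θstar)), H (θ - θstar)⟫ := by
  set δ := θ - θstar
  set d := P (H δ)
  have hd : Hhat d = H δ := congr($hP (H δ))
  have hdecrease : η * ⟪d, H d⟫ ≤ ⟪d, H δ⟫ := by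
    have := hgap.inner_nonneg_right d
    rw [sub_apply, smul_apply, inner_sub_right, real_inner_smul_right, hd] at this
    linarith
  have hdirection : 0 ≤ ⟪d, H δ⟫ :=
    (mul_nonneg hη (hH.inner_nonneg_right d)).trans hdecrease
  have hexpand : ⟪δ - η • d, H (δ - η • d)⟫ =
      ⟪δ, H δ⟫ - 2 * η * ⟪d, H δ⟫ + η ^ 2 * ⟪d, H d⟫ := by
    have hsymm : ⟪δ, H d⟫ = ⟪d, H δ⟫ := by
      rw [← hH.inner_left_eq_inner_right, real_inner_comm]
    rw [map_sub, map_smul]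
    simp only [inner_sub_left, inner_sub_right, real_inner_smul_left, real_inner_smul_right,
      hsymm]
    ring
  rw [sub_right_comm, hexpand]
  nlinarith [mul_le_mul_of_nonneg_left hdecrease hη,
    mul_nonneg (mul_nonneg hη (sub_nonneg.2 hα)) hdirection]

theorem stmt6_general (n M : ℕ) (q : Fin (M + 1) → ℕ) (hq : ∀ i, q i ≤ n)
    (v : Fin (M + 1) → OrthonormalBasis (Fin (n + 1)) ℝ (EuclideanSpace ℝ (Fin (n + 1))))
    (lam : Fin (M + 1) → Fin (n + 1) → ℝ)
    (Hi : Fin (M + 1) → (EuclideanSpace ℝ (Fin (n + 1)) →L[ℝ] EuclideanSpace ℝ (Fin (n + 1))))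
    (hmono : ∀ i, ∀ k l : Fin (n + 1), k ≤ l → lam i l ≤ lam i k)
    (hpos : ∀ i k, 0 < lam i k)
    (hHi : ∀ i k, Hi i (v i k) = lam i k • v i k)
    (ρi : Fin (M + 1) → ℝ) (hρpos : ∀ i, 0 < ρi i)
    (hρub : ∀ i, ρi i ≤ lam i ⟨q i, Nat.lt_succ_of_le (hq i)⟩)
    (H Hhat HhatInv : EuclideanSpace ℝ (Fin (n + 1)) →L[ℝ] EuclideanSpace ℝ (Fin (n + 1)))
    (hH : H = ((M : ℝ) + 1)⁻¹ • ∑ i, Hi i)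
    (hHhat : Hhat = ((M : ℝ) + 1)⁻¹ • ∑ i, hatH (v i) (lam i) (q i) (ρi i))
    (hinv₂ : Hhat.comp HhatInv = ContinuousLinearMap.id ℝ _)
    (η : ℝ)
    (hη : η = Finset.univ.inf' Finset.univ_nonempty
        (fun i : Fin (M + 1) => ρi i / lam i ⟨q i, Nat.lt_succ_of_le (hq i)⟩)) :
    (∀ x : EuclideanSpace ℝ (Fin (n + 1)), 0 ≤ (inner ℝ x ((Hhat - η • H) x) : ℝ)) ∧
    (∀ (θ θstar : EuclideanSpace ℝ (Fin (n + 1))) (fstar α : ℝ), 0 < α → α < 1 / 2 →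
      fstar + (1 / 2) * (inner ℝ ((θ - η • HhatInv (H (θ - θstar))) - θstar)
          (H ((θ - η • HhatInv (H (θ - θstar))) - θstar)) : ℝ) ≤
        (fstar + (1 / 2) * (inner ℝ (θ - θstar) (H (θ - θstar)) : ℝ)) -
          α * η * (inner ℝ (HhatInv (H (θ - θstar))) (H (θ - θstar)) : ℝ)) := by
  have hlam_q : ∀ i, 0 < lam i ⟨q i, Nat.lt_succ_of_le (hq i)⟩ := fun i => hpos i _
  have hη_le : ∀ i, η ≤ ρi i / lam i ⟨q i, Nat.lt_succ_of_le (hq i)⟩ :=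
    fun i => hη ▸ Finset.inf'_le _ (Finset.mem_univ i)
  have hη₀ : 0 ≤ η :=
    hη ▸ (Finset.le_inf'_iff _ _).2 fun i _ => (div_pos (hρpos i) (hlam_q i)).le
  have hη₁ : η ≤ 1 := (hη_le 0).trans ((div_le_one (hlam_q 0)).2 (hρub 0))
  have hlocal : ∀ i, (hatH (v i) (lam i) (q i) (ρi i) - η • Hi i).IsPositive := fun i =>
    isPositive_hatH_sub_smul (v i) (fun _ _ h => hmono i _ _ h) (fun k => (hpos i k).le)
      (hHi i) hη₀ hη₁ ⟨q i, Nat.lt_succ_of_le (hq i)⟩ ((le_div_iff₀ (hlam_q i)).1 (hη_le i))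
  have hgap : (Hhat - η • H).IsPositive := by
    have hsplit : Hhat - η • H =
        ((M : ℝ) + 1)⁻¹ • ∑ i, (hatH (v i) (lam i) (q i) (ρi i) - η • Hi i) := by
      rw [hH, hHhat, Finset.sum_sub_distrib, ← Finset.smul_sum]
      module
    rw [hsplit]
    exact (ContinuousLinearMap.isPositive_sum _ fun i _ => hlocal i).smul_of_nonneg
      (by positivity)
  have hHpos : H.IsPositive := hH ▸ (ContinuousLinearMap.isPositive_sum _ fun i _ =>
    (v i).isPositive_of_apply_eq_smul (hHi i) fun k => (hpos i k).le).smul_of_nonneg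
      (by positivity)
  exact ⟨hgap.inner_nonneg_right, fun θ θstar fstar α _ hα =>
    armijo_of_isPositive_sub_smul hHpos hinv₂ hη₀ hα.le hgap θ θstar fstar⟩

/-- in the federated least-squares setting with `ρ⁽ⁱ⁾ ∈ (0, λ_{q⁽ⁱ⁾+1}⁽ⁱ⁾]`,
the step size `η = minᵢ ρ⁽ⁱ⁾/λ_{q⁽ⁱ⁾+1}⁽ⁱ⁾` makes `Ĥ − ηH` positive semidefinite, and
consequently satisfies the Armijo–Goldstein condition for any `α ∈ (0,1/2)`. -/
theorem stmt6 (n M : ℕ) (q : Fin (M + 1) → ℕ) (hq : ∀ i, q i ≤ n)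
    (v : Fin (M + 1) → OrthonormalBasis (Fin (n + 1)) ℝ (EuclideanSpace ℝ (Fin (n + 1))))
    (lam : Fin (M + 1) → Fin (n + 1) → ℝ)
    (Hi : Fin (M + 1) → (EuclideanSpace ℝ (Fin (n + 1)) →L[ℝ] EuclideanSpace ℝ (Fin (n + 1))))
    (hmono : ∀ i, ∀ k l : Fin (n + 1), k ≤ l → lam i l ≤ lam i k)
    (hpos : ∀ i k, 0 < lam i k)
    (hHi : ∀ i k, Hi i (v i k) = lam i k • v i k)
    (ρi : Fin (M + 1) → ℝ) (hρpos : ∀ i, 0 < ρi i)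
    (hρub : ∀ i, ρi i ≤ lam i ⟨q i, Nat.lt_succ_of_le (hq i)⟩)
    (H Hhat HhatInv : EuclideanSpace ℝ (Fin (n + 1)) →L[ℝ] EuclideanSpace ℝ (Fin (n + 1)))
    (hH : H = ((M : ℝ) + 1)⁻¹ • ∑ i, Hi i)
    (hHhat : Hhat = ((M : ℝ) + 1)⁻¹ • ∑ i, hatH (v i) (lam i) (q i) (ρi i))
    (hinv₁ : HhatInv.comp Hhat = ContinuousLinearMap.id ℝ _)
    (hinv₂ : Hhat.comp HhatInv = ContinuousLinearMap.id ℝ _)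
    (η : ℝ)
    (hη : η = Finset.univ.inf' Finset.univ_nonempty
        (fun i : Fin (M + 1) => ρi i / lam i ⟨q i, Nat.lt_succ_of_le (hq i)⟩)) :
    (∀ x : EuclideanSpace ℝ (Fin (n + 1)), 0 ≤ (inner ℝ x ((Hhat - η • H) x) : ℝ)) ∧
    (∀ (θ θstar : EuclideanSpace ℝ (Fin (n + 1))) (fstar α : ℝ), 0 < α → α < 1 / 2 →
      fstar + (1 / 2) * (inner ℝ ((θ - η • HhatInv (H (θ - θstar))) - θstar)
          (H ((θ - η • HhatInv (H (θ - θstar))) - θstar)) : ℝ) ≤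
        (fstar + (1 / 2) * (inner ℝ (θ - θstar) (H (θ - θstar)) : ℝ)) -
          α * η * (inner ℝ (HhatInv (H (θ - θstar))) (H (θ - θstar)) : ℝ)) :=
  stmt6_general n M q hq v lam Hi hmono hpos hHi ρi hρpos hρub H Hhat HhatInv hH hHhat hinv₂ η hη
end

section
/- Let (c_k) be a sequence of positive reals with log c_k ≤ C for all k and a set X_t ⊆ {1,...,t} such that c_k ≤ B a^k for all k ∈ X_t, where B > 0 and a ∈ (0,1). If |X_t| ≥ √t · h(t) with h(t) → ∞, then limsup_{t→∞}(∏_{k=1}^{t} c_k)^{1/t} = 0. -/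
open Filter Finset

lemma sum_ge_card_sq (s : Finset ℕ) (hs : ∀ k ∈ s, 1 ≤ k) :
    s.card * s.card ≤ 2 * ∑ k ∈ s, k := by
  induction s using Finset.strongInduction with
  | _ s ih =>
    rcases s.eq_empty_or_nonempty with rfl | hne
    · simp
    · set m := s.max' hne with hm
      have hms : m ∈ s := s.max'_mem hne
      have hsub : s ⊆ Finset.Icc 1 m := fun k hk =>
        Finset.mem_Icc.2 ⟨hs k hk, s.le_max' k hk⟩
      have hcard : s.card ≤ m := by
        have := Finset.card_le_card hsub
        simpa using this
      have ihm := ih (s.erase m) (Finset.erase_ssubset hms)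
        (fun k hk => hs k (Finset.mem_of_mem_erase hk))
      rw [← Finset.add_sum_erase s _ hms]
      have hc : (s.erase m).card = s.card - 1 := Finset.card_erase_of_mem hms
      obtain ⟨n, hn⟩ : ∃ n, s.card = n + 1 :=
        ⟨s.card - 1, (Nat.succ_pred_eq_of_pos (Finset.card_pos.2 hne)).symm⟩
      rw [hn] at hcard ⊢
      rw [hc, hn] at ihm
      simp only [Nat.add_sub_cancel] at ihm
      nlinarith

/-- if `log c_k ≤ C` and `c_k ≤ B·aᵏ` on sets `X_t ⊆ {1,…,t}` with
`|X_t| ≥ √t · h(t)` and `h(t) → ∞`, then `limsup (∏_{k=1}^t c_k)^{1/t} = 0`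
(super-linear convergence). -/
theorem stmt11 (c : ℕ → ℝ) (C B a : ℝ) (X : ℕ → Finset ℕ) (h : ℕ → ℝ)
    (hcpos : ∀ k, 0 < c k) (hlog : ∀ k, Real.log (c k) ≤ C)
    (hB : 0 < B) (ha : a ∈ Set.Ioo (0 : ℝ) 1)
    (hX : ∀ t, X t ⊆ Finset.Icc 1 t)
    (hXc : ∀ t, ∀ k ∈ X t, c k ≤ B * a ^ k)
    (hXcard : ∀ t : ℕ, Real.sqrt t * h t ≤ (X t).card)
    (hh : Filter.Tendsto h Filter.atTop Filter.atTop) :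
    Filter.limsup (fun t : ℕ => (∏ k ∈ Finset.Icc 1 t, c k) ^ ((1 : ℝ) / t))
      Filter.atTop = 0 := by
  obtain ⟨ha0, ha1⟩ := ha
  have hla : Real.log a < 0 := Real.log_neg ha0 ha1
  set B' := max (Real.log B) 0 with hB'
  set C' := max C 0 with hC'
  set P : ℕ → ℝ := fun t => ∏ k ∈ Finset.Icc 1 t, c k with hP
  have hPpos : ∀ t, 0 < P t := fun t => Finset.prod_pos (fun k _ => hcpos k)
  -- key bound
  have key : ∀ t : ℕ, 1 ≤ t → 0 ≤ h t →
      (1 / (t : ℝ)) * Real.log (P t) ≤ B' + C' + Real.log a / 2 * (h t) ^ 2 := by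
    intro t ht hht
    have htR : (0 : ℝ) < t := by exact_mod_cast ht
    have hlogsum : Real.log (P t) = ∑ k ∈ Finset.Icc 1 t, Real.log (c k) :=
      Real.log_prod (fun k _ => (hcpos k).ne')
    have hsplit : ∑ k ∈ Finset.Icc 1 t \ X t, Real.log (c k)
        + ∑ k ∈ X t, Real.log (c k) = ∑ k ∈ Finset.Icc 1 t, Real.log (c k) :=
      Finset.sum_sdiff (hX t)
    have hcardX : (X t).card ≤ t := by
      have := Finset.card_le_card (hX t)
      simpa using this
    -- bound on X t
    have h1 : ∑ k ∈ X t, Real.log (c k)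
        ≤ (X t).card * Real.log B + Real.log a * ∑ k ∈ X t, (k : ℝ) := by
      have : ∀ k ∈ X t, Real.log (c k) ≤ Real.log B + (k : ℝ) * Real.log a := by
        intro k hk
        have h2 : Real.log (c k) ≤ Real.log (B * a ^ k) :=
          Real.log_le_log (hcpos k) (hXc t k hk)
        rwa [Real.log_mul hB.ne' (pow_ne_zero _ ha0.ne'), Real.log_pow] at h2
      calc ∑ k ∈ X t, Real.log (c k)
          ≤ ∑ k ∈ X t, (Real.log B + (k : ℝ) * Real.log a) :=
            Finset.sum_le_sum this
        _ = (X t).card * Real.log B + Real.log a * ∑ k ∈ X t, (k : ℝ) := by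
            rw [Finset.sum_add_distrib, Finset.sum_const, nsmul_eq_mul, Finset.mul_sum]
            congr 1
            exact Finset.sum_congr rfl (fun k _ => mul_comm _ _)
    -- sum over X t ≥ card² / 2 ≥ t h(t)² / 2
    have hsum2 : (t : ℝ) * (h t) ^ 2 / 2 ≤ ∑ k ∈ X t, (k : ℝ) := by
      have hn : ((X t).card : ℝ) * ((X t).card) ≤ 2 * ∑ k ∈ X t, (k : ℝ) := by
        have h7 := sum_ge_card_sq (X t) (fun k hk => (Finset.mem_Icc.1 (hX t hk)).1)
        have h8 : (((X t).card * (X t).card : ℕ) : ℝ) ≤ ((2 * ∑ k ∈ X t, k : ℕ) : ℝ) := by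
          exact_mod_cast h7
        push_cast at h8
        exact h8
      have hsq : (t : ℝ) * (h t) ^ 2 ≤ ((X t).card : ℝ) * ((X t).card) := by
        have h0 : (0:ℝ) ≤ Real.sqrt t * h t := mul_nonneg (Real.sqrt_nonneg _) hht
        have := mul_le_mul (hXcard t) (hXcard t) h0 (Nat.cast_nonneg _)
        have hss : Real.sqrt t * Real.sqrt t = (t : ℝ) :=
          Real.mul_self_sqrt (Nat.cast_nonneg t)
        have heq2 : (Real.sqrt t * h t) * (Real.sqrt t * h t) = (t : ℝ) * (h t) ^ 2 := by
          rw [mul_mul_mul_comm, hss]; ring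
        rw [← heq2]; exact this
      linarith
    have h3 : Real.log a * ∑ k ∈ X t, (k : ℝ)
        ≤ Real.log a * ((t : ℝ) * (h t) ^ 2 / 2) :=
      mul_le_mul_of_nonpos_left hsum2 hla.le
    have h4 : ((X t).card : ℝ) * Real.log B ≤ (t : ℝ) * B' := by
      have hc0 : (0:ℝ) ≤ (X t).card := Nat.cast_nonneg _
      have hct : ((X t).card : ℝ) ≤ t := by exact_mod_cast hcardX
      rcases le_or_gt 0 (Real.log B) with hb | hb
      · calc ((X t).card : ℝ) * Real.log B ≤ (t : ℝ) * Real.log B :=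
            mul_le_mul_of_nonneg_right hct hb
          _ ≤ (t : ℝ) * B' := by
            apply mul_le_mul_of_nonneg_left (le_max_left _ _) htR.le
      · calc ((X t).card : ℝ) * Real.log B ≤ 0 := mul_nonpos_of_nonneg_of_nonpos hc0 hb.le
          _ ≤ (t : ℝ) * B' := mul_nonneg htR.le (le_max_right _ _)
    -- bound on complement
    have h5 : ∑ k ∈ Finset.Icc 1 t \ X t, Real.log (c k) ≤ (t : ℝ) * C' := by
      have hcs : ((Finset.Icc 1 t \ X t).card : ℝ) ≤ t := by
        have := Finset.card_le_card (Finset.sdiff_subset (s := Finset.Icc 1 t) (t := X t))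
        have h6 : (Finset.Icc 1 t).card = t := by simp
        exact_mod_cast h6 ▸ this
      calc ∑ k ∈ Finset.Icc 1 t \ X t, Real.log (c k)
          ≤ ∑ _k ∈ Finset.Icc 1 t \ X t, C' :=
            Finset.sum_le_sum (fun k _ => le_trans (hlog k) (le_max_left _ _))
        _ = ((Finset.Icc 1 t \ X t).card : ℝ) * C' := by
            rw [Finset.sum_const, nsmul_eq_mul]
        _ ≤ (t : ℝ) * C' := mul_le_mul_of_nonneg_right hcs (le_max_right _ _)
    have htotal : Real.log (P t) ≤ (t : ℝ) * (B' + C' + Real.log a / 2 * (h t) ^ 2) := by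
      rw [hlogsum, ← hsplit]
      have := add_le_add h5 (le_trans h1 (add_le_add h4 h3))
      calc _ ≤ (t:ℝ) * C' + ((t:ℝ) * B' + Real.log a * ((t : ℝ) * (h t) ^ 2 / 2)) := this
        _ = (t : ℝ) * (B' + C' + Real.log a / 2 * (h t) ^ 2) := by ring
    rw [one_div, inv_mul_le_iff₀ htR]
    exact htotal
  -- the bound tends to -∞
  have hbot : Tendsto (fun t : ℕ => B' + C' + Real.log a / 2 * (h t) ^ 2) atTop atBot := by
    apply tendsto_atBot_add_const_left
    have hsq : Tendsto (fun t : ℕ => (h t) ^ 2) atTop atTop := by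
      exact (tendsto_pow_atTop two_ne_zero).comp hh
    have : Real.log a / 2 < 0 := by linarith
    exact Tendsto.const_mul_atTop_of_neg this hsq
  have hmain : Tendsto (fun t : ℕ => (1 / (t : ℝ)) * Real.log (P t)) atTop atBot := by
    apply tendsto_atBot_mono' atTop _ hbot
    filter_upwards [eventually_ge_atTop 1, hh.eventually_ge_atTop 0] with t ht hht
    exact key t ht hht
  have hexp : Tendsto (fun t : ℕ => Real.exp ((1 / (t : ℝ)) * Real.log (P t)))
      atTop (nhds 0) := Real.tendsto_exp_atBot.comp hmain
  have heq : ∀ᶠ t : ℕ in atTop,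
      Real.exp ((1 / (t : ℝ)) * Real.log (P t)) = (P t) ^ ((1 : ℝ) / t) := by
    filter_upwards [eventually_ge_atTop 1] with t ht
    rw [Real.rpow_def_of_pos (hPpos t), mul_comm]
  exact ((hexp.congr' heq).limsup_eq)
end

section
/- Let f: ℝⁿ → ℝ be κ̄-strongly convex, K-smooth, with L-Lipschitz Hessian, and let Ĥₜ be a symmetric matrix with Ĥₜ ⪰ κ̄I and Ĥₜ ⪰ H(θ^{k_t}) (the Hessian at an earlier iterate θ^{k_t}). Let p = Ĥₜ^{-1}∇f(θ^t). If 3κ̄(‖θ^t − θ*‖ + ‖θ^{k_t} − θ*‖) + ‖∇f(θ^t)‖ ≤ (3κ̄²/L)(1 − 2α), then f(θ^t − p) ≤ f(θ^t) − α pᵀ∇f(θ^t), i.e., the full step η = 1 satisfies the Armijo–Goldstein condition with parameter α ∈ (0, 1/2). -/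
/-!
Write `σ̄² = ⟪p, ∇f(θᵗ)⟫`. Taylor's formula with an `L`-Lipschitz Hessian gives
`f(θᵗ - p) ≤ f(θᵗ) - σ̄² + ⟪p, H(θᵗ) p⟫ / 2 + L‖p‖³ / 6`. Since `Ĥₜ ⪰ H(θ^{kₜ})` and `H` is
`L`-Lipschitz, `⟪p, H(θᵗ) p⟫ ≤ σ̄² + L‖θᵗ - θ^{kₜ}‖‖p‖²`, while `Ĥₜ ⪰ κ̄I` gives `κ̄‖p‖² ≤ σ̄²` and
hence `κ̄‖p‖ ≤ ‖∇f(θᵗ)‖`. Bounding `‖θᵗ - θ^{kₜ}‖` through `θ*`, the hypothesis makes the two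
Lipschitz remainders at most `(1/2 - α) σ̄²`, which is the Armijo condition.
-/

/-- The Hessian of `f` as a continuous linear map, `Hess f θ = D(∇f)(θ)`. -/
noncomputable def hess {n : ℕ} (f : EuclideanSpace ℝ (Fin n) → ℝ)
    (θ : EuclideanSpace ℝ (Fin n)) :
    EuclideanSpace ℝ (Fin n) →L[ℝ] EuclideanSpace ℝ (Fin n) :=
  fderiv ℝ (gradient f) θ

open Set InnerProductSpace

theorem ContDiff.contDiff_gradient {E : Type*} [NormedAddCommGroup E] [InnerProductSpace ℝ E]
    [CompleteSpace E] {f : E → ℝ} {n : WithTop ℕ∞} (hf : ContDiff ℝ (n + 1) f) :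
    ContDiff ℝ n (gradient f) :=
  (toDual ℝ E).symm.toContinuousLinearEquiv.contDiff.comp (hf.fderiv_right le_rfl)

theorem image_one_le_of_second_deriv_le {φ φ' φ'' : ℝ → ℝ} {M : ℝ}
    (hφ : ∀ t, HasDerivAt φ (φ' t) t) (hφ' : ∀ t, HasDerivAt φ' (φ'' t) t)
    (hφ'' : ∀ t ∈ Ico (0 : ℝ) 1, φ'' t ≤ φ'' 0 + M * t) :
    φ 1 ≤ φ 0 + φ' 0 + φ'' 0 / 2 + M / 6 := by
  have hB' (t : ℝ) :
      HasDerivAt (fun s => φ' 0 + s * φ'' 0 + M * s ^ 2 / 2) (φ'' 0 + M * t) t := by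
    refine ((((hasDerivAt_id t).mul_const (φ'' 0)).const_add (φ' 0)).add
      (((hasDerivAt_pow 2 t).const_mul M).div_const 2)).congr_deriv ?_
    norm_num; ring
  have hB (t : ℝ) : HasDerivAt (fun s => φ 0 + s * φ' 0 + s ^ 2 / 2 * φ'' 0 + M * s ^ 3 / 6)
      (φ' 0 + t * φ'' 0 + M * t ^ 2 / 2) t := by
    refine (((((hasDerivAt_id t).mul_const (φ' 0)).const_add (φ 0)).add
      (((hasDerivAt_pow 2 t).div_const 2).mul_const (φ'' 0))).add
      (((hasDerivAt_pow 3 t).const_mul M).div_const 6)).congr_deriv ?_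
    norm_num; ring
  have hcont {g g' : ℝ → ℝ} (hg : ∀ t, HasDerivAt g (g' t) t) : ContinuousOn g (Icc 0 1) :=
    fun t _ => (hg t).continuousAt.continuousWithinAt
  have hφ'_le : ∀ t ∈ Icc (0 : ℝ) 1, φ' t ≤ φ' 0 + t * φ'' 0 + M * t ^ 2 / 2 :=
    image_le_of_deriv_right_le_deriv_boundary (hcont hφ') (fun t _ => (hφ' t).hasDerivWithinAt)
      (by simp) (hcont hB') (fun t _ => (hB' t).hasDerivWithinAt) hφ''
  have hφ_le := image_le_of_deriv_right_le_deriv_boundary (hcont hφ)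
      (fun t _ => (hφ t).hasDerivWithinAt) (by simp) (hcont hB) (fun t _ => (hB t).hasDerivWithinAt)
      (fun t ht => hφ'_le t (Ico_subset_Icc_self ht)) (right_mem_Icc.2 zero_le_one)
  norm_num at hφ_le; linarith

theorem inner_apply_le_inner_apply_add_norm_sub_mul_sq {E : Type*} [NormedAddCommGroup E]
    [InnerProductSpace ℝ E] (A B : E →L[ℝ] E) (x : E) :
    inner ℝ x (A x) ≤ inner ℝ x (B x) + ‖A - B‖ * ‖x‖ ^ 2 := by
  have : inner ℝ x ((A - B) x) ≤ ‖A - B‖ * ‖x‖ ^ 2 :=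
    calc inner ℝ x ((A - B) x) ≤ ‖x‖ * ‖(A - B) x‖ := real_inner_le_norm _ _
      _ ≤ ‖x‖ * (‖A - B‖ * ‖x‖) := by gcongr; exact (A - B).le_opNorm x
      _ = ‖A - B‖ * ‖x‖ ^ 2 := by ring
  rw [sub_apply, inner_sub_right] at this
  linarith

theorem image_add_le_of_lipschitz_hessian {E : Type*} [NormedAddCommGroup E]
    [InnerProductSpace ℝ E] [CompleteSpace E] {f : E → ℝ} {L : ℝ} (hf : Differentiable ℝ f)
    (hgf : Differentiable ℝ (gradient f)) (x v : E)
    (hLip : ∀ y, ‖fderiv ℝ (gradient f) y - fderiv ℝ (gradient f) x‖ ≤ L * ‖y - x‖) :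
    f (x + v) ≤ f x + inner ℝ (gradient f x) v + inner ℝ v (fderiv ℝ (gradient f) x v) / 2
      + L * ‖v‖ ^ 3 / 6 := by
  set H := fderiv ℝ (gradient f)
  have hline (t : ℝ) : HasDerivAt (fun s : ℝ => x + s • v) v t := by
    simpa using ((hasDerivAt_id t).smul_const v).const_add x
  have hφ (t : ℝ) :
      HasDerivAt (fun s : ℝ => f (x + s • v)) (inner ℝ (gradient f (x + t • v)) v) t :=
    ((hf _).hasGradientAt.hasFDerivAt.comp_hasDerivAt t (hline t)).congr_deriv
      toDual_apply_apply
  have hφ' (t : ℝ) : HasDerivAt (fun s : ℝ => inner ℝ (gradient f (x + s • v)) v)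
      (inner ℝ v (H (x + t • v) v)) t := by
    simpa [real_inner_comm v] using
      ((hgf _).hasFDerivAt.comp_hasDerivAt t (hline t)).inner ℝ (hasDerivAt_const t v)
  have hφ'' : ∀ t ∈ Ico (0 : ℝ) 1,
      inner ℝ v (H (x + t • v) v) ≤ inner ℝ v (H (x + (0 : ℝ) • v) v) + L * ‖v‖ ^ 3 * t := by
    intro t ht
    have hdist : ‖H (x + t • v) - H x‖ ≤ L * (t * ‖v‖) := by
      simpa [norm_smul, abs_of_nonneg ht.1] using hLip (x + t • v)
    calc inner ℝ v (H (x + t • v) v) ≤ inner ℝ v (H x v) + ‖H (x + t • v) - H x‖ * ‖v‖ ^ 2 :=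
          inner_apply_le_inner_apply_add_norm_sub_mul_sq _ _ v
      _ ≤ inner ℝ v (H x v) + L * (t * ‖v‖) * ‖v‖ ^ 2 := by gcongr
      _ = inner ℝ v (H (x + (0 : ℝ) • v) v) + L * ‖v‖ ^ 3 * t := by
          simp only [zero_smul, add_zero]; ring
  simpa using image_one_le_of_second_deriv_le hφ hφ' hφ''

theorem mul_norm_le_norm_of_mul_sq_le_inner {E : Type*} [NormedAddCommGroup E]
    [InnerProductSpace ℝ E] {κ : ℝ} {x y : E} (h : κ * ‖x‖ ^ 2 ≤ inner ℝ x y) : κ * ‖x‖ ≤ ‖y‖ := by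
  rcases (norm_nonneg x).eq_or_lt with hx | hx
  · rw [← hx, mul_zero]; exact norm_nonneg y
  · refine le_of_mul_le_mul_right ?_ hx
    calc κ * ‖x‖ * ‖x‖ = κ * ‖x‖ ^ 2 := by ring
      _ ≤ ‖x‖ * ‖y‖ := h.trans (real_inner_le_norm x y)
      _ = ‖y‖ * ‖x‖ := mul_comm _ _

theorem cubic_remainder_le_armijo_slack {κ L α a d r G σ : ℝ} (hκ : 0 < κ) (hL : 0 < L) (ha : 0 ≤ a)
    (hd : 0 ≤ d) (hσ : κ * a ^ 2 ≤ σ) (hG : κ * a ≤ G) (hdr : d ≤ r)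
    (hcond : 3 * κ * r + G ≤ 3 * κ ^ 2 / L * (1 - 2 * α)) :
    L * d * a ^ 2 / 2 + L * a ^ 3 / 6 ≤ (1 / 2 - α) * σ := by
  have hLcond : L * (3 * κ * r + G) ≤ 3 * κ ^ 2 * (1 - 2 * α) :=
    calc L * (3 * κ * r + G) ≤ L * (3 * κ ^ 2 / L * (1 - 2 * α)) := by gcongr
      _ = 3 * κ ^ 2 * (1 - 2 * α) := by field_simp
  have hσ0 : 0 ≤ σ := le_trans (by positivity) hσ
  have hr : 0 ≤ L * (3 * κ * r + G) := mul_nonneg hL.le (by nlinarith [mul_nonneg hκ.le ha])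
  refine le_of_mul_le_mul_left ?_ (pow_pos hκ 2)
  calc κ ^ 2 * (L * d * a ^ 2 / 2 + L * a ^ 3 / 6)
        = κ * a ^ 2 * (L * (3 * κ * d + κ * a)) / 6 := by ring
    _ ≤ κ * a ^ 2 * (L * (3 * κ * r + G)) / 6 := by gcongr
    _ ≤ σ * (L * (3 * κ * r + G)) / 6 := by gcongr
    _ ≤ σ * (3 * κ ^ 2 * (1 - 2 * α)) / 6 := by gcongr
    _ = κ ^ 2 * ((1 / 2 - α) * σ) := by ring

theorem stmt15_general (n : ℕ) (f : EuclideanSpace ℝ (Fin n) → ℝ) (hf : ContDiff ℝ 2 f)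
    (kbar L : ℝ) (hk : 0 < kbar) (hL : 0 < L)
    (hLip : ∀ θ θ' : EuclideanSpace ℝ (Fin n), ‖hess f θ - hess f θ'‖ ≤ L * ‖θ - θ'‖)
    (θstar : EuclideanSpace ℝ (Fin n))
    (Hhat HhatInv : EuclideanSpace ℝ (Fin n) →L[ℝ] EuclideanSpace ℝ (Fin n))
    (hlb : ∀ x : EuclideanSpace ℝ (Fin n), kbar * ‖x‖ ^ 2 ≤ (inner ℝ x (Hhat x) : ℝ))
    (θk θt : EuclideanSpace ℝ (Fin n))
    (hdom : ∀ x : EuclideanSpace ℝ (Fin n),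
      (inner ℝ x (hess f θk x) : ℝ) ≤ (inner ℝ x (Hhat x) : ℝ))
    (hinv₂ : Hhat.comp HhatInv = ContinuousLinearMap.id ℝ _)
    (α : ℝ)
    (hcond : 3 * kbar * (‖θt - θstar‖ + ‖θk - θstar‖) + ‖gradient f θt‖ ≤
      (3 * kbar ^ 2 / L) * (1 - 2 * α)) :
    f (θt - HhatInv (gradient f θt)) ≤
      f θt - α * (inner ℝ (HhatInv (gradient f θt)) (gradient f θt) : ℝ) := by
  set g := gradient f θt
  set p := HhatInv g
  have hHp : Hhat p = g := DFunLike.congr_fun hinv₂ g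
  have hσ : kbar * ‖p‖ ^ 2 ≤ inner ℝ p g := hHp ▸ hlb p
  have hcurv : inner ℝ p (hess f θt p) ≤ inner ℝ p g + L * ‖θt - θk‖ * ‖p‖ ^ 2 :=
    calc inner ℝ p (hess f θt p)
        ≤ inner ℝ p (hess f θk p) + ‖hess f θt - hess f θk‖ * ‖p‖ ^ 2 :=
          inner_apply_le_inner_apply_add_norm_sub_mul_sq _ _ p
      _ ≤ inner ℝ p g + L * ‖θt - θk‖ * ‖p‖ ^ 2 := by
          gcongr
          · exact hHp ▸ hdom p
          · exact hLip θt θk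
  have hdist : ‖θt - θk‖ ≤ ‖θt - θstar‖ + ‖θk - θstar‖ :=
    (norm_sub_le_norm_sub_add_norm_sub θt θstar θk).trans_eq (by rw [norm_sub_rev θstar])
  have htaylor :
      f (θt - p) ≤ f θt - inner ℝ p g + inner ℝ p (hess f θt p) / 2 + L * ‖p‖ ^ 3 / 6 := by
    have := image_add_le_of_lipschitz_hessian (hf.differentiable two_ne_zero)
      ((hf.contDiff_gradient (n := 1)).differentiable one_ne_zero) θt (-p)
      (fun y => hLip y θt)
    simp only [← sub_eq_add_neg, map_neg, inner_neg_left, inner_neg_right, neg_neg, norm_neg,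
      real_inner_comm p (gradient f θt)] at this
    exact this
  have hslack := cubic_remainder_le_armijo_slack hk hL (norm_nonneg p) (norm_nonneg _) hσ
    (mul_norm_le_norm_of_mul_sq_le_inner hσ) hdist hcond
  linarith

/-- step-size-one phase for SHED.  With `Ĥₜ ⪰ κ̄I`, `Ĥₜ ⪰ H(θ^{kₜ})`
and `p = Ĥₜ⁻¹∇f(θᵗ)`, if
`3κ̄(‖θᵗ−θ*‖ + ‖θ^{kₜ}−θ*‖) + ‖∇f(θᵗ)‖ ≤ (3κ̄²/L)(1−2α)` then the full step `η = 1`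
satisfies the Armijo–Goldstein condition with parameter `α ∈ (0,1/2)`. -/
theorem stmt15 (n : ℕ) (f : EuclideanSpace ℝ (Fin n) → ℝ) (hf : ContDiff ℝ 2 f)
    (kbar K L : ℝ) (hk : 0 < kbar) (hK : 0 < K) (hL : 0 < L)
    (hsc : ∀ θ x : EuclideanSpace ℝ (Fin n), kbar * ‖x‖ ^ 2 ≤ (inner ℝ x (hess f θ x) : ℝ))
    (hsm : ∀ θ x : EuclideanSpace ℝ (Fin n), (inner ℝ x (hess f θ x) : ℝ) ≤ K * ‖x‖ ^ 2)
    (hLip : ∀ θ θ' : EuclideanSpace ℝ (Fin n), ‖hess f θ - hess f θ'‖ ≤ L * ‖θ - θ'‖)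
    (θstar : EuclideanSpace ℝ (Fin n)) (hmin : IsMinOn f Set.univ θstar)
    (hgrad0 : gradient f θstar = 0)
    (Hhat HhatInv : EuclideanSpace ℝ (Fin n) →L[ℝ] EuclideanSpace ℝ (Fin n))
    (hsa : IsSelfAdjoint Hhat)
    (hlb : ∀ x : EuclideanSpace ℝ (Fin n), kbar * ‖x‖ ^ 2 ≤ (inner ℝ x (Hhat x) : ℝ))
    (θk θt : EuclideanSpace ℝ (Fin n))
    (hdom : ∀ x : EuclideanSpace ℝ (Fin n),
      (inner ℝ x (hess f θk x) : ℝ) ≤ (inner ℝ x (Hhat x) : ℝ))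
    (hinv₁ : HhatInv.comp Hhat = ContinuousLinearMap.id ℝ _)
    (hinv₂ : Hhat.comp HhatInv = ContinuousLinearMap.id ℝ _)
    (α : ℝ) (hα : 0 < α ∧ α < 1 / 2)
    (hcond : 3 * kbar * (‖θt - θstar‖ + ‖θk - θstar‖) + ‖gradient f θt‖ ≤
      (3 * kbar ^ 2 / L) * (1 - 2 * α)) :
    f (θt - HhatInv (gradient f θt)) ≤
      f θt - α * (inner ℝ (HhatInv (gradient f θt)) (gradient f θt) : ℝ) :=
  stmt15_general n f hf kbar L hk hL hLip θstar Hhat HhatInv hlb θk θt hdom hinv₂ α hcond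
end
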